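/- Let U be a universal operator on a separable infinite-dimensional complex Hilbert space H. Then there exist r > 0 and a holomorphic (analytic) map z ↦ y_z from the open disk B(0,r) ⊆ ℂ into H such that y_z ≠ 0 and U y_z = z • y_z for every z ∈ B(0,r). -/

import Mathlib

/-!
Pick an orthonormal sequence `e` in `H` and a backward shift `T` along it: `T (e 0) = 0` and
`T (e (n + 1)) = e n`. Then `y z = ∑ zⁿ • e n` is a holomorphic field of eigenvectors of `T` on
the unit disc (`⟪e 0, y z⟫ = 1` keeps it nonzero). Universality gives `U ∘ J = c • J ∘ T` with `J`
injective, so `w ↦ J (y (w / c))` is a holomorphic eigenvector field of `U` on the disc of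
radius `‖c‖`.
-/

noncomputable section

/-- Universal operator on a complex Hilbert space. -/
def IsUniversal {H : Type*} [NormedAddCommGroup H] [InnerProductSpace ℂ H]
    (U : H →L[ℂ] H) : Prop :=
  ∀ T : H →L[ℂ] H, ∃ M : Submodule ℂ H, IsClosed (M : Set H) ∧ (∀ x ∈ M, U x ∈ M) ∧
    ∃ c : ℂ, c ≠ 0 ∧ ∃ J : H ≃L[ℂ] M, ∀ x : H, U (J x : H) = c • ((J (T x) : H))

open Metric

def HasHolomorphicEigenvectorField {E : Type*} [NormedAddCommGroup E] [NormedSpace ℂ E]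
    (T : E →L[ℂ] E) (r : ℝ) : Prop :=
  ∃ y : ℂ → E, DifferentiableOn ℂ y (ball 0 r) ∧ ∀ z ∈ ball 0 r, y z ≠ 0 ∧ T (y z) = z • y z

section PowerSeries

variable {E : Type*} [NormedAddCommGroup E] [NormedSpace ℂ E] [CompleteSpace E]
  {e : ℕ → E} {C : ℝ}

theorem summable_pow_smul (he : ∀ n, ‖e n‖ ≤ C) {z : ℂ} (hz : ‖z‖ < 1) :
    Summable fun n ↦ z ^ n • e n := by
  refine .of_norm_bounded ((summable_geometric_of_lt_one (norm_nonneg z) hz).mul_left C)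
    fun n ↦ ?_
  rw [norm_smul, norm_pow, mul_comm]
  exact mul_le_mul_of_nonneg_right (he n) (by positivity)

theorem differentiableOn_tsum_pow_smul (he : ∀ n, ‖e n‖ ≤ C) :
    DifferentiableOn ℂ (fun z ↦ ∑' n, z ^ n • e n) (ball (0 : ℂ) 1) := by
  intro w hw
  rw [mem_ball_zero_iff] at hw
  obtain ⟨r, hwr, hr1⟩ := exists_between hw
  have hdiff : DifferentiableOn ℂ (fun z ↦ ∑' n, z ^ n • e n) (ball (0 : ℂ) r) := by
    refine Complex.differentiableOn_tsum_of_summable_norm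
      ((summable_geometric_of_lt_one ((norm_nonneg w).trans hwr.le) hr1).mul_left C)
      (fun n ↦ ((differentiable_pow n).smul_const (e n)).differentiableOn) isOpen_ball
      fun n z hz ↦ ?_
    rw [mem_ball_zero_iff] at hz
    rw [norm_smul, norm_pow, mul_comm]
    exact mul_le_mul (he n) (pow_le_pow_left₀ (norm_nonneg z) hz.le n) (by positivity)
      ((norm_nonneg _).trans (he n))
  exact (hdiff.differentiableAt (isOpen_ball.mem_nhds (mem_ball_zero_iff.2 hwr)))
    |>.differentiableWithinAt

theorem apply_tsum_pow_smul_of_backward_shift (T : E →L[ℂ] E) (h0 : T (e 0) = 0)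
    (hsucc : ∀ n, T (e (n + 1)) = e n) (he : ∀ n, ‖e n‖ ≤ C) {z : ℂ} (hz : ‖z‖ < 1) :
    T (∑' n, z ^ n • e n) = z • ∑' n, z ^ n • e n := by
  have hsum := (summable_pow_smul he hz).hasSum
  have hT := (hasSum_nat_add_iff' 1).2 (hsum.mapL T)
  simp only [Finset.range_one, Finset.sum_singleton, pow_zero, one_smul, h0, sub_zero, map_smul,
    hsucc] at hT
  refine hT.unique ?_
  simpa only [smul_smul, pow_succ'] using hsum.const_smul z

end PowerSeries

section OrthonormalSequence

variable {𝕜 H : Type*} [RCLike 𝕜] [NormedAddCommGroup H] [InnerProductSpace 𝕜 H]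

theorem exists_orthonormal_nat [CompleteSpace H] (hinf : ¬ FiniteDimensional 𝕜 H) :
    ∃ e : ℕ → H, Orthonormal 𝕜 e := by
  obtain ⟨w, b, -⟩ := exists_hilbertBasis 𝕜 H
  have : Infinite w := by
    by_contra hfin
    have : Finite w := not_infinite_iff_finite.1 hfin
    have := Fintype.ofFinite w
    exact hinf (.of_basis b.toOrthonormalBasis.toBasis)
  exact ⟨b ∘ Infinite.natEmbedding w, b.orthonormal.comp _ (Infinite.natEmbedding w).injective⟩

theorem Orthonormal.tsum_pow_smul_ne_zero {e : ℕ → H} (he : Orthonormal 𝕜 e) {z : 𝕜}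
    (hz : Summable fun n ↦ z ^ n • e n) : ∑' n, z ^ n • e n ≠ 0 := by
  classical
  have h1 : HasSum (fun n ↦ inner 𝕜 (e 0) (z ^ n • e n)) 1 := by
    convert hasSum_ite_eq 0 (1 : 𝕜) using 2 with n
    rw [inner_smul_right, orthonormal_iff_ite.1 he]
    rcases eq_or_ne n 0 with rfl | hn <;> simp [*, eq_comm]
  intro h0
  have := (hz.hasSum.mapL (innerSL 𝕜 (e 0))).unique h1
  simp [h0] at this

theorem Orthonormal.exists_backward_shift [CompleteSpace H] {e : ℕ → H} (he : Orthonormal 𝕜 e) :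
    ∃ T : H →L[𝕜] H, T (e 0) = 0 ∧ ∀ n, T (e (n + 1)) = e n := by
  classical
  -- `T = V W†`, where `V δₙ = e n` and `W δₙ = e (n + 1)`; `W†W = 1` as `W` is an isometry.
  set V := he.orthogonalFamily.linearIsometry.toContinuousLinearMap
  have he' : Orthonormal 𝕜 (e ∘ Nat.succ) := he.comp _ Nat.succ_injective
  set W := he'.orthogonalFamily.linearIsometry.toContinuousLinearMap
  have hV (n : ℕ) : V (lp.single 2 n 1) = e n := by
    simp [V, he.orthogonalFamily.linearIsometry_apply_single]
  have hW (n : ℕ) : W (lp.single 2 n 1) = e (n + 1) := by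
    simp [W, he'.orthogonalFamily.linearIsometry_apply_single]
  have hWW : (ContinuousLinearMap.adjoint W).comp W = 1 :=
    (ContinuousLinearMap.norm_map_iff_adjoint_comp_self W).1 fun x ↦ by simp [W]
  refine ⟨V.comp (ContinuousLinearMap.adjoint W), ?_, fun n ↦ ?_⟩
  · have horth (f : lp (fun _ : ℕ ↦ 𝕜) 2) : inner 𝕜 (e 0) (W f) = 0 := by
      refine ((he'.orthogonalFamily.hasSum_linearIsometry f).mapL (innerSL 𝕜 (e 0))).unique ?_
      convert hasSum_zero with n
      simp [he.inner_eq_zero (Nat.succ_ne_zero n).symm]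
    have hadj : ContinuousLinearMap.adjoint W (e 0) = 0 := ext_inner_left 𝕜 fun f ↦ by
      rw [ContinuousLinearMap.adjoint_inner_right, inner_zero_right, inner_eq_zero_symm, horth]
    rw [ContinuousLinearMap.comp_apply, hadj, map_zero]
  · rw [ContinuousLinearMap.comp_apply, ← hW, ← ContinuousLinearMap.comp_apply _ W, hWW]
    exact hV n

end OrthonormalSequence

theorem exists_hasHolomorphicEigenvectorField {H : Type*} [NormedAddCommGroup H]
    [InnerProductSpace ℂ H] [CompleteSpace H] (hinf : ¬ FiniteDimensional ℂ H) :
    ∃ T : H →L[ℂ] H, HasHolomorphicEigenvectorField T 1 := by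
  obtain ⟨e, he⟩ := exists_orthonormal_nat hinf
  obtain ⟨T, h0, hsucc⟩ := he.exists_backward_shift
  have hbound (n : ℕ) : ‖e n‖ ≤ 1 := (he.1 n).le
  refine ⟨T, _, differentiableOn_tsum_pow_smul hbound, fun z hz ↦ ?_⟩
  rw [mem_ball_zero_iff] at hz
  exact ⟨he.tsum_pow_smul_ne_zero (summable_pow_smul hbound hz),
    apply_tsum_pow_smul_of_backward_shift T h0 hsucc hbound hz⟩

theorem HasHolomorphicEigenvectorField.of_intertwining {E F : Type*} [NormedAddCommGroup E]
    [NormedSpace ℂ E] [NormedAddCommGroup F] [NormedSpace ℂ F] {T : E →L[ℂ] E} {U : F →L[ℂ] F}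
    {r : ℝ} (hT : HasHolomorphicEigenvectorField T r) {J : E →L[ℂ] F}
    (hJ : Function.Injective J) {c : ℂ} (hc : c ≠ 0) (hUJ : ∀ x, U (J x) = c • J (T x)) :
    HasHolomorphicEigenvectorField U (‖c‖ * r) := by
  obtain ⟨y, hy, hyT⟩ := hT
  have hball {w : ℂ} (hw : w ∈ ball 0 (‖c‖ * r)) : w / c ∈ ball 0 r := by
    rw [mem_ball_zero_iff, norm_div, div_lt_iff₀' (norm_pos_iff.2 hc)]
    exact mem_ball_zero_iff.1 hw
  refine ⟨fun w ↦ J (y (w / c)), J.differentiable.comp_differentiableOn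
    (hy.comp (differentiableOn_id.div_const c) fun w ↦ hball), fun w hw ↦ ?_⟩
  obtain ⟨hne, heig⟩ := hyT _ (hball hw)
  refine ⟨(map_ne_zero_iff J hJ).2 hne, ?_⟩
  rw [hUJ, heig, map_smul, smul_smul, mul_div_cancel₀ w hc]

theorem holomorphic_eigenvector_field_of_universal {H : Type*} [NormedAddCommGroup H]
    [InnerProductSpace ℂ H] [CompleteSpace H]
    (hinf : ¬ FiniteDimensional ℂ H)
    (U : H →L[ℂ] H) (hU : IsUniversal U) :
    ∃ r : ℝ, 0 < r ∧ ∃ y : ℂ → H,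
      DifferentiableOn ℂ y (Metric.ball (0 : ℂ) r) ∧
      ∀ z ∈ Metric.ball (0 : ℂ) r, y z ≠ 0 ∧ U (y z) = z • y z := by
  obtain ⟨T, hT⟩ := exists_hasHolomorphicEigenvectorField hinf
  obtain ⟨M, -, -, c, hc, J, hJ⟩ := hU T
  exact ⟨_, mul_pos (norm_pos_iff.2 hc) one_pos,
    hT.of_intertwining (J := M.subtypeL ∘L J) (Subtype.val_injective.comp J.injective) hc hJ⟩

end
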